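/- arXiv:2101.09326 — 2 statements merged into one kernel-verified Lean document; each statement's English description precedes it below -/
import Mathlib

section
/- Let f_{n,d}: S¹ → D_n(S¹) be the linear n-valued circle map of degree d, f_{n,d}(p(t)) = {p((dt+k)/n) : k = 1,...,n}. Then f_{n,d} has a proper partition if and only if n and d have a common factor m > 1; and if m = gcd(n,d) > 1, then f_{n,d} partitions into m submaps, each an (n/m)-valued map homotopic to the linear (n/m)-valued circle map of degree d/m. -/
open Function Set

/-- The ordered configuration space of `n` points in `Y`. -/
def OrdConf (n : ℕ) (Y : Type*) [TopologicalSpace Y] : Type _ :=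
  {y : Fin n → Y // Function.Injective y}

instance (n : ℕ) (Y : Type*) [TopologicalSpace Y] : TopologicalSpace (OrdConf n Y) :=
  instTopologicalSpaceSubtype

/-- Two ordered configurations are equivalent when they differ by a permutation. -/
def confSetoid (n : ℕ) (Y : Type*) [TopologicalSpace Y] : Setoid (OrdConf n Y) where
  r a b := ∃ σ : Equiv.Perm (Fin n), a.1 ∘ σ = b.1
  iseqv := by
    constructor
    · intro a; exact ⟨Equiv.refl _, rfl⟩
    · rintro a b ⟨σ, h⟩
      refine ⟨σ.symm, funext fun i => ?_⟩
      have := congrFun h (σ.symm i)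
      simpa using this.symm
    · rintro a b c ⟨σ, h1⟩ ⟨τ, h2⟩
      refine ⟨τ.trans σ, funext fun i => ?_⟩
      have h1' := congrFun h1 (τ i)
      have h2' := congrFun h2 i
      simp only [Function.comp_apply] at h1' h2' ⊢
      simp [Equiv.trans_apply, h1', h2']

/-- The unordered configuration space `D_n(Y)` of `n` points in `Y`,
with the quotient topology. -/
def UnordConf (n : ℕ) (Y : Type*) [TopologicalSpace Y] : Type _ :=
  Quotient (confSetoid n Y)

instance (n : ℕ) (Y : Type*) [TopologicalSpace Y] : TopologicalSpace (UnordConf n Y) :=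
  instTopologicalSpaceQuotient

/-- The underlying `n`-element subset of `Y` determined by an unordered configuration. -/
def UnordConf.values {n : ℕ} {Y : Type*} [TopologicalSpace Y] : UnordConf n Y → Set Y :=
  Quotient.lift (fun a => Set.range a.1) (by
    rintro a b ⟨σ, h⟩
    show Set.range a.1 = Set.range b.1
    rw [← h, Set.range_comp]
    simp)

/-- An `n`-valued map from `X` to `Y` is a continuous map `X → D_n(Y)`. -/
abbrev NValuedMap (X Y : Type*) [TopologicalSpace X] [TopologicalSpace Y] (n : ℕ) :=
  C(X, UnordConf n Y)

/-- `g` is a submap of `f` when `g(x) ⊆ f(x)` for all `x`. -/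
def IsSubmap {X Y : Type*} [TopologicalSpace X] [TopologicalSpace Y] {k n : ℕ}
    (g : NValuedMap X Y k) (f : NValuedMap X Y n) : Prop :=
  ∀ x : X, (g x).values ⊆ (f x).values

/-- An `n`-valued map is irreducible when it admits no proper (`k`-valued, `0 < k < n`) submap. -/
def IsIrreducibleNV {X Y : Type*} [TopologicalSpace X] [TopologicalSpace Y] {n : ℕ}
    (f : NValuedMap X Y n) : Prop :=
  ¬ ∃ (k : ℕ) (g : NValuedMap X Y k), 0 < k ∧ k < n ∧ IsSubmap g f

/-- A partition of an `n`-valued map `f` into `l` multimaps: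
a family of `kᵢ`-valued maps with `k₁ + ⋯ + k_l = n` whose values unite to those of `f`. -/
structure NVPartition {X Y : Type*} [TopologicalSpace X] [TopologicalSpace Y] {n : ℕ}
    (f : NValuedMap X Y n) (l : ℕ) where
  card : Fin l → ℕ
  card_pos : ∀ i, 0 < card i
  maps : ∀ i, NValuedMap X Y (card i)
  sum_card : ∑ i, card i = n
  values_eq : ∀ x : X, (f x).values = ⋃ i, UnordConf.values ((maps i) x)

/-- A partition is into irreducibles when every member is irreducible. -/
def NVPartition.IsIrreduciblePartition {X Y : Type*} [TopologicalSpace X] [TopologicalSpace Y]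
    {n : ℕ} {f : NValuedMap X Y n} {l : ℕ} (P : NVPartition f l) : Prop :=
  ∀ i, IsIrreducibleNV (P.maps i)

/-- A space is a (compact) finite polyhedron when it is homeomorphic to the underlying
space of a finite simplicial complex in some Euclidean space. -/
def IsFinitePolyhedron (X : Type*) [TopologicalSpace X] : Prop :=
  ∃ (N : ℕ) (K : Geometry.SimplicialComplex ℝ (EuclideanSpace ℝ (Fin N))),
    K.faces.Finite ∧ Nonempty (X ≃ₜ K.space)

/-- The circle `S¹ = ℝ/ℤ`. -/
abbrev Circle1 := AddCircle (1 : ℝ)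

/-- The covering projection `ℝ → S¹`, `t ↦ t mod 1`. -/
noncomputable def circleProj (t : ℝ) : Circle1 := (t : AddCircle (1 : ℝ))

/-- `f` is (a representative of) the linear `n`-valued circle map of degree `d`:
`f(p(t)) = {p((dt+1)/n), …, p((dt+n)/n)}`. -/
def IsLinearCircleMap (n : ℕ) (d : ℤ) (f : NValuedMap Circle1 Circle1 n) : Prop :=
  ∀ t : ℝ,
    UnordConf.values (f (circleProj t)) =
      Set.range fun k : Fin n => circleProj ((d * t + ((k : ℕ) + 1)) / n)

/-- `f` has a proper partition: a partition into at least two multimaps. -/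
def HasProperPartition {X Y : Type*} [TopologicalSpace X] [TopologicalSpace Y] {n : ℕ}
    (f : NValuedMap X Y n) : Prop :=
  ∃ l : ℕ, 2 ≤ l ∧ Nonempty (NVPartition f l)

/-!
Write `n = m n'` and `d = m d'`. Grouping the points `p((d t + j) / n)` by the residue of `j`
mod `m` splits `f_{n,d}` into `m` linear `n'`-valued maps of degree `d'` whose offsets differ,
and moving the offset is a homotopy.

Conversely, the pieces of a partition are pairwise disjoint, so by connectedness of `ℝ` each
branch `t ↦ p((d t + j) / n)` stays in one piece. Branch `j + n` is branch `j`, and branch `j`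
continued once around the circle is branch `j + d`; hence the set of branches lying in a piece is
invariant under translation by `gcd(n, d)`. If that gcd is `1`, every piece contains every branch,
which is impossible with two disjoint pieces.
-/

section Configurations

variable {Y : Type*} [TopologicalSpace Y] {k : ℕ}

lemma OrdConf.continuous_apply (i : Fin k) : Continuous fun a : OrdConf k Y => a.1 i :=
  (_root_.continuous_apply i).comp continuous_subtype_val

namespace UnordConf

lemma exists_injective_values_eq_range (u : UnordConf k Y) :
    ∃ a : Fin k → Y, Injective a ∧ u.values = range a :=
  Quotient.inductionOn u fun a => ⟨a.1, a.2, rfl⟩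

lemma values_nonempty (hk : 0 < k) (u : UnordConf k Y) : u.values.Nonempty := by
  obtain ⟨a, -, ha⟩ := u.exists_injective_values_eq_range
  have : Nonempty (Fin k) := Fin.pos_iff_nonempty.mp hk
  exact ha ▸ range_nonempty a

lemma values_injective : Injective (values : UnordConf k Y → Set Y) := by
  intro u v h
  induction u using Quotient.inductionOn with | h a =>
  induction v using Quotient.inductionOn with | h b =>
  change range a.1 = range b.1 at h
  let σ : Equiv.Perm (Fin k) := (Equiv.ofInjective b.1 b.2).trans
    ((Equiv.setCongr h.symm).trans (Equiv.ofInjective a.1 a.2).symm)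
  refine Quotient.sound ⟨σ, funext fun i => ?_⟩
  exact Equiv.apply_ofInjective_symm a.2 _

lemma isOpenQuotientMap_mk : IsOpenQuotientMap (Quotient.mk (confSetoid k Y)) := by
  refine ⟨Quotient.mk_surjective, continuous_quotient_mk', fun U hU => ?_⟩
  let permute (σ : Equiv.Perm (Fin k)) : OrdConf k Y → OrdConf k Y :=
    fun a => ⟨fun i => a.1 (σ i), a.2.comp σ.injective⟩
  have hsat : Quotient.mk (confSetoid k Y) ⁻¹' (Quotient.mk _ '' U) =
      ⋃ σ, permute σ ⁻¹' U := by
    ext a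
    simp only [mem_preimage, mem_image, mem_iUnion]
    constructor
    · rintro ⟨b, hb, hab⟩
      obtain ⟨σ, hσ⟩ := Quotient.exact hab.symm
      exact ⟨σ, by rwa [show permute σ a = b from Subtype.ext hσ]⟩
    · rintro ⟨σ, ha⟩
      exact ⟨permute σ a, ha, Quotient.sound ⟨σ⁻¹, funext fun i => by simp [permute]⟩⟩
  have hcont (σ : Equiv.Perm (Fin k)) : Continuous (permute σ) :=
    (continuous_pi fun i => OrdConf.continuous_apply (σ i)).subtype_mk _
  refine isQuotientMap_quotient_mk'.isOpen_preimage.mp ?_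
  change IsOpen (Quotient.mk (confSetoid k Y) ⁻¹' _)
  rw [hsat]
  exact isOpen_iUnion fun σ => hU.preimage (hcont σ)

lemma isClosed_setOf_mem_values [T2Space Y] :
    IsClosed {p : UnordConf k Y × Y | p.2 ∈ p.1.values} := by
  refine (isOpenQuotientMap_mk.prodMap IsOpenQuotientMap.id).isQuotientMap.isClosed_preimage.mp ?_
  change IsClosed {q : OrdConf k Y × Y | q.2 ∈ range q.1.1}
  simp only [mem_range, ofPred_exists]
  exact isClosed_iUnion_of_finite fun i =>
    isClosed_eq ((OrdConf.continuous_apply i).comp continuous_fst) continuous_snd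

end UnordConf

namespace NVPartition

variable {X Y : Type*} [TopologicalSpace X] [TopologicalSpace Y] {n l : ℕ}
  {f : NValuedMap X Y n}

lemma pairwise_disjoint_values (P : NVPartition f l) (x : X) :
    Pairwise (Disjoint on fun i => (P.maps i x).values) := by
  classical
  choose a _ hrange using fun i => (P.maps i x).exists_injective_values_eq_range
  obtain ⟨b, hb, hfb⟩ := (f x).exists_injective_values_eq_range
  let F : (Σ i, Fin (P.card i)) → Y := fun s => a s.1 s.2
  -- `F` maps a type with `n` elements onto the `n`-element set `f x`
  have hF : Finset.univ.image F = Finset.univ.image b := by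
    apply Finset.coe_injective
    simp only [Finset.coe_image, Finset.coe_univ, image_univ]
    rw [range_sigma_eq_iUnion_range, ← hfb, P.values_eq x]
    simp only [hrange]
    rfl
  have hinj : Injective F := by
    have hcard :
        (Finset.univ.image F).card = (Finset.univ : Finset (Σ i, Fin (P.card i))).card := by
      rw [hF, Finset.card_image_of_injective _ hb]
      simp [P.sum_card]
    simpa using Finset.card_image_iff.mp hcard
  intro i i' hii
  simp only [onFun, hrange]
  exact disjoint_range_iff.mpr fun y y' hyy =>
    hii (congrArg Sigma.fst (hinj (a₁ := ⟨i, y⟩) (a₂ := ⟨i', y'⟩) hyy))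

lemma isClopen_setOf_mem_values [T2Space Y] (P : NVPartition f l) {Z : Type*}
    [TopologicalSpace Z] {g : Z → X} {s : Z → Y} (hg : Continuous g) (hs : Continuous s)
    (hsf : ∀ z, s z ∈ (f (g z)).values) (i : Fin l) :
    IsClopen {z | s z ∈ (P.maps i (g z)).values} := by
  have hclosed : ∀ i, IsClosed {z | s z ∈ (P.maps i (g z)).values} := fun i =>
    UnordConf.isClosed_setOf_mem_values.preimage
      (((P.maps i).continuous.comp hg).prodMk hs)
  refine ⟨hclosed i, ?_⟩
  have : {z | s z ∈ (P.maps i (g z)).values}ᶜ =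
      ⋃ i' : {i' // i' ≠ i}, {z | s z ∈ (P.maps i' (g z)).values} := by
    ext z
    have hz := hsf z
    rw [P.values_eq, mem_iUnion] at hz
    obtain ⟨i₀, hi₀⟩ := hz
    simp only [mem_compl_iff, mem_ofPred_eq, mem_iUnion, Subtype.exists]
    refine ⟨fun h => ⟨i₀, fun h' => h (h' ▸ hi₀), hi₀⟩, ?_⟩
    rintro ⟨i', hi', hm⟩ hm'
    exact (P.pairwise_disjoint_values (g z) hi').ne_of_mem hm hm' rfl
  rw [← isClosed_compl_iff, this]
  exact isClosed_iUnion_of_finite fun i' => hclosed i'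

end NVPartition

end Configurations

lemma Int.exists_fin_cast_eq_emod {m : ℕ} (hm : 0 < m) (j : ℤ) :
    ∃ i : Fin m, (i : ℤ) = j % m :=
  ⟨⟨(j % m).toNat, by have := Int.emod_lt_of_pos j (by omega : (0 : ℤ) < m); omega⟩,
    Int.toNat_of_nonneg (Int.emod_nonneg _ (by omega))⟩

namespace Function.Periodic

variable {α : Type*} {ψ : ℤ → α}

lemma int_gcd {a b : ℤ} (ha : Periodic ψ a) (hb : Periodic ψ b) :
    Periodic ψ (Int.gcd a b) := by
  rw [Int.gcd_eq_gcd_ab, mul_comm a, mul_comm b]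
  exact (ha.int_mul _).add_period (hb.int_mul _)

lemma range_fin {n : ℕ} (h : Periodic ψ n) (hn : 0 < n) :
    range (fun k : Fin n => ψ k) = range ψ := by
  refine (range_subset_iff.2 fun k => mem_range_self _).antisymm ?_
  rintro _ ⟨j, rfl⟩
  obtain ⟨k, hk⟩ := Int.exists_fin_cast_eq_emod hn j
  refine ⟨k, show ψ k = ψ j from ?_⟩
  rw [hk, Int.emod_def, mul_comm]
  exact h.sub_int_mul_eq _

end Function.Periodic

lemma Int.iUnion_range_add_mul {α : Type*} (ψ : ℤ → α) {m : ℕ} (hm : 0 < m) :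
    ⋃ i : Fin m, Set.range (fun k : ℤ => ψ (i + m * k)) = Set.range ψ := by
  refine iUnion_subset (fun i => range_subset_iff.2 fun k => mem_range_self _) |>.antisymm ?_
  rintro _ ⟨j, rfl⟩
  obtain ⟨i, hi⟩ := Int.exists_fin_cast_eq_emod hm j
  exact mem_iUnion.2 ⟨i, j / m, show ψ _ = ψ j by rw [hi, Int.emod_add_mul_ediv]⟩

lemma ContinuousMap.homotopic_curry {P X Y : Type*} [TopologicalSpace P] [PathConnectedSpace P]
    [TopologicalSpace X] [TopologicalSpace Y] (F : C(P × X, Y)) (a b : P) :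
    (F.curry a).Homotopic (F.curry b) :=
  let γ := PathConnectedSpace.somePath a b
  ⟨{ toFun := fun q => F (γ q.1, q.2)
     map_zero_left := by simp
     map_one_left := by simp }⟩

lemma continuous_circleProj : Continuous circleProj := continuous_quotient_mk'

lemma circleProj_add_int (t : ℝ) (k : ℤ) : circleProj (t + k) = circleProj t := by
  simp [circleProj]

lemma exists_int_eq_add_of_circleProj_eq {t t' : ℝ} (h : circleProj t = circleProj t') :
    ∃ k : ℤ, t' = t + k := by
  obtain ⟨k, hk⟩ := (AddCircle.coe_eq_zero_iff 1).1 (by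
    rw [AddCircle.coe_sub, sub_eq_zero]; exact h.symm : ((t' - t : ℝ) : AddCircle (1 : ℝ)) = 0)
  exact ⟨k, by simp at hk; linarith⟩

section LinearCircleMap

variable {n : ℕ} {d : ℤ}

/-- `p((d t + c + j) / n)`; the paper's `f_{n,d}` has offset `c = 1`. -/
noncomputable def linearBranch (n : ℕ) (d : ℤ) (c t : ℝ) (j : ℤ) : Circle1 :=
  circleProj ((d * t + c + j) / n)

lemma continuous_linearBranch (n : ℕ) (d j : ℤ) :
    Continuous fun p : ℝ × ℝ => linearBranch n d p.1 p.2 j :=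
  continuous_circleProj.comp (by fun_prop)

lemma linearBranch_periodic (hn : 0 < n) (d : ℤ) (c t : ℝ) :
    Periodic (linearBranch n d c t) n := fun j => by
  have : (d * t + c + ((j + n : ℤ) : ℝ)) / n = (d * t + c + j) / n + (1 : ℤ) := by
    field_simp; push_cast; ring
  rw [linearBranch, this, circleProj_add_int]; rfl

lemma linearBranch_add_int (c t : ℝ) (k j : ℤ) :
    linearBranch n d c (t + k) j = linearBranch n d c t (j + k * d) := by
  simp only [linearBranch]; push_cast; ring_nf

lemma linearBranch_injective (hn : 0 < n) (d : ℤ) (c t : ℝ) :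
    Injective fun k : Fin n => linearBranch n d c t k := by
  intro k k' h
  have hn' : (0 : ℝ) < n := by exact_mod_cast hn
  have hmem (k : Fin n) :
      (d * t + c + k) / n ∈ Ico ((d * t + c) / n) ((d * t + c) / n + 1) := by
    have : (k : ℝ) < n := by exact_mod_cast k.2
    refine ⟨div_le_div_of_nonneg_right (by simp) hn'.le, ?_⟩
    rw [div_add_one hn'.ne', div_lt_div_iff_of_pos_right hn']
    linarith
  have := (AddCircle.coe_eq_coe_iff_of_mem_Ico (hmem k) (hmem k')).1 h
  rw [div_left_inj' hn'.ne', add_right_inj] at this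
  exact Fin.ext (by exact_mod_cast this)

lemma linearBranch_mul {m n' : ℕ} {d' : ℤ} (hm : 0 < m) (hnn : m * n' = n) (hdd : m * d' = d)
    (c t : ℝ) (i : ℕ) (k : ℤ) :
    linearBranch n' d' ((c + i) / m) t k = linearBranch n d c t (i + m * k) := by
  subst hnn hdd
  have : (m : ℝ) ≠ 0 := by exact_mod_cast hm.ne'
  simp only [linearBranch]
  congr 1
  push_cast
  field_simp
  ring

noncomputable def linearConf (hn : 0 < n) (d : ℤ) (c t : ℝ) : UnordConf n Circle1 :=
  Quotient.mk _ ⟨fun k : Fin n => linearBranch n d c t k, linearBranch_injective hn d c t⟩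

lemma values_linearConf (hn : 0 < n) (d : ℤ) (c t : ℝ) :
    (linearConf hn d c t).values = range (linearBranch n d c t) :=
  (linearBranch_periodic hn d c t).range_fin hn

lemma linearConf_add_int (hn : 0 < n) (d : ℤ) (c t : ℝ) (k : ℤ) :
    linearConf hn d c (t + k) = linearConf hn d c t := by
  refine UnordConf.values_injective ?_
  simp only [values_linearConf]
  rw [← (Equiv.addRight (k * d)).surjective.range_comp (linearBranch n d c t)]
  exact congrArg range (funext fun j => linearBranch_add_int c t k j)

lemma continuous_linearConf (hn : 0 < n) (d : ℤ) :
    Continuous fun p : ℝ × ℝ => linearConf hn d p.1 p.2 :=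
  continuous_quotient_mk'.comp <|
    (continuous_pi fun k : Fin n => continuous_linearBranch n d k).subtype_mk _

lemma isQuotientMap_prodMap_circleProj :
    Topology.IsQuotientMap
      ((ContinuousMap.id ℝ).prodMap ⟨circleProj, continuous_circleProj⟩) :=
  (IsOpenQuotientMap.id.prodMap QuotientAddGroup.isOpenQuotientMap_mk).isQuotientMap

lemma factorsThrough_linearConf (hn : 0 < n) (d : ℤ) :
    FactorsThrough (⟨_, continuous_linearConf hn d⟩ : C(ℝ × ℝ, UnordConf n Circle1))
      ((ContinuousMap.id ℝ).prodMap ⟨circleProj, continuous_circleProj⟩) := by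
  rintro ⟨c, t⟩ ⟨c', t'⟩ h
  obtain ⟨rfl, ht⟩ := Prod.ext_iff.1 h
  obtain ⟨k, rfl⟩ := exists_int_eq_add_of_circleProj_eq ht
  exact (linearConf_add_int hn d c t k).symm

/-- Bundling all offsets `c` into one map on `ℝ × S¹` yields the homotopies between the
`linearCircleMap`s. -/
noncomputable def linearFamily (hn : 0 < n) (d : ℤ) : C(ℝ × Circle1, UnordConf n Circle1) :=
  isQuotientMap_prodMap_circleProj.lift _ (factorsThrough_linearConf hn d)

lemma linearFamily_apply (hn : 0 < n) (d : ℤ) (c t : ℝ) :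
    linearFamily hn d (c, circleProj t) = linearConf hn d c t :=
  ContinuousMap.congr_fun
    (isQuotientMap_prodMap_circleProj.lift_comp _ (factorsThrough_linearConf hn d)) (c, t)

noncomputable def linearCircleMap (hn : 0 < n) (d : ℤ) (c : ℝ) : NValuedMap Circle1 Circle1 n :=
  (linearFamily hn d).curry c

lemma values_linearCircleMap (hn : 0 < n) (d : ℤ) (c t : ℝ) :
    (linearCircleMap hn d c (circleProj t)).values = range (linearBranch n d c t) := by
  rw [linearCircleMap, ContinuousMap.curry_apply, linearFamily_apply, values_linearConf]

lemma linearCircleMap_homotopic (hn : 0 < n) (d : ℤ) (c c' : ℝ) :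
    (linearCircleMap hn d c).Homotopic (linearCircleMap hn d c') :=
  (linearFamily hn d).homotopic_curry c c'

end LinearCircleMap

namespace IsLinearCircleMap

variable {n : ℕ} {d : ℤ} {f : NValuedMap Circle1 Circle1 n}

lemma values_eq (hn : 0 < n) (hf : IsLinearCircleMap n d f) (t : ℝ) :
    (f (circleProj t)).values = range (linearBranch n d 1 t) := by
  rw [hf t, ← (linearBranch_periodic hn d 1 t).range_fin hn]
  exact congrArg range (funext fun k => congrArg circleProj (by push_cast; ring))

lemma eq_linearCircleMap (hn : 0 < n) (hf : IsLinearCircleMap n d f) :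
    f = linearCircleMap hn d 1 := by
  ext x
  induction x using QuotientAddGroup.induction_on with | H t =>
  exact UnordConf.values_injective <|
    (hf.values_eq hn t).trans (values_linearCircleMap hn d 1 t).symm

lemma values_eq_iUnion {m n' : ℕ} {d' : ℤ} (hm : 0 < m) (hn' : 0 < n') (hnn : m * n' = n)
    (hdd : m * d' = d) (hf : IsLinearCircleMap n d f) (x : Circle1) :
    (f x).values = ⋃ i : Fin m, (linearCircleMap hn' d' ((1 + i) / m) x).values := by
  induction x using QuotientAddGroup.induction_on with | H t =>
  change (f (circleProj t)).values = _
  rw [hf.values_eq (hnn ▸ Nat.mul_pos hm hn') t,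
    ← Int.iUnion_range_add_mul (linearBranch n d 1 t) hm]
  refine iUnion_congr fun i => ?_
  rw [← funext (linearBranch_mul hm hnn hdd 1 t i)]
  exact (values_linearCircleMap hn' d' _ t).symm

lemma hasProperPartition (hn : 0 < n) (hf : IsLinearCircleMap n d f) {m : ℕ} (hm : 1 < m)
    (hmn : m ∣ n) (hmd : (m : ℤ) ∣ d) : HasProperPartition f :=
  have hn' : 0 < n / m := Nat.div_pos (Nat.le_of_dvd hn hmn) (by omega)
  ⟨m, hm, ⟨{
    card := fun _ => n / m
    card_pos := fun _ => hn'
    maps := fun i => linearCircleMap hn' (d / m) ((1 + i) / m)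
    sum_card := by simp [Nat.mul_div_cancel' hmn]
    values_eq := hf.values_eq_iUnion (by omega) hn' (Nat.mul_div_cancel' hmn)
      (Int.mul_ediv_cancel' hmd) }⟩⟩

lemma mem_maps_linearBranch_iff (hn : 0 < n) (hf : IsLinearCircleMap n d f) {l : ℕ}
    (P : NVPartition f l) (i : Fin l) (j : ℤ) (t t' : ℝ) :
    linearBranch n d 1 t j ∈ (P.maps i (circleProj t)).values ↔
      linearBranch n d 1 t' j ∈ (P.maps i (circleProj t')).values := by
  have hclopen := P.isClopen_setOf_mem_values continuous_circleProj
    ((continuous_linearBranch n d j).comp (continuous_const.prodMk continuous_id))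
    (fun t => (hf.values_eq hn t).symm ▸ mem_range_self j) i
  -- `ℝ` is connected
  rcases isClopen_iff.1 hclopen with h | h <;> simp [Set.ext_iff] at h <;> simp [h]

lemma one_lt_gcd (hn : 0 < n) (hf : IsLinearCircleMap n d f) (hp : HasProperPartition f) :
    1 < Int.gcd n d := by
  obtain ⟨l, hl, ⟨P⟩⟩ := hp
  let inPiece (i : Fin l) (j : ℤ) : Prop :=
    linearBranch n d 1 0 j ∈ (P.maps i (circleProj 0)).values
  have hperiodic (i : Fin l) : Periodic (inPiece i) (Int.gcd n d) := by
    refine Periodic.int_gcd (fun j => ?_) (fun j => ?_)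
    · simp only [inPiece, linearBranch_periodic hn d 1 0 j]
    · have h := hf.mem_maps_linearBranch_iff hn P i j (0 + (1 : ℤ)) 0
      rw [linearBranch_add_int, circleProj_add_int, one_mul] at h
      exact propext h
  have hocc (i : Fin l) : ∃ j, inPiece i j := by
    obtain ⟨y, hy⟩ := (P.maps i (circleProj 0)).values_nonempty (P.card_pos i)
    have hyf : y ∈ (f (circleProj 0)).values := P.values_eq _ ▸ mem_iUnion.2 ⟨i, hy⟩
    rw [hf.values_eq hn] at hyf
    obtain ⟨j, rfl⟩ := hyf
    exact ⟨j, hy⟩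
  by_contra hgcd
  have hgcd : Int.gcd n d = 1 := by
    have := Int.gcd_pos_of_ne_zero_left d (Int.natCast_ne_zero.2 hn.ne'); omega
  have hall (i : Fin l) : inPiece i 0 := by
    obtain ⟨j, hj⟩ := hocc i
    have := (hperiodic i).int_mul_eq j
    rw [hgcd, Nat.cast_one, mul_one] at this
    exact this ▸ hj
  exact (P.pairwise_disjoint_values (circleProj 0) (i := ⟨0, by omega⟩) (j := ⟨1, hl⟩)
    (by simp)).ne_of_mem (hall _) (hall _) rfl

end IsLinearCircleMap

theorem statement_12 {n : ℕ} (hn : 0 < n) (d : ℤ)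
    (f : NValuedMap Circle1 Circle1 n) (hf : IsLinearCircleMap n d f) :
    (HasProperPartition f ↔ ∃ m : ℤ, 1 < m ∧ m ∣ (n : ℤ) ∧ m ∣ d) ∧
    (∀ m : ℕ, m = Int.gcd (n : ℤ) d → 1 < m →
      ∃ g : Fin m → NValuedMap Circle1 Circle1 (n / m),
        (∀ x : Circle1, UnordConf.values (f x) = ⋃ i, UnordConf.values (g i x)) ∧
        ∀ (i : Fin m) (f' : NValuedMap Circle1 Circle1 (n / m)),
          IsLinearCircleMap (n / m) (d / (m : ℤ)) f' → (g i).Homotopic f') := by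
  refine ⟨⟨fun hp => ?_, fun ⟨m, hm, hmn, hmd⟩ => ?_⟩, fun m hm hm1 => ?_⟩
  · exact ⟨_, by exact_mod_cast hf.one_lt_gcd hn hp,
      Int.gcd_dvd_left _ _, Int.gcd_dvd_right _ _⟩
  · lift m to ℕ using by omega
    exact hf.hasProperPartition hn (by omega) (by exact_mod_cast hmn) hmd
  · have hmn : m ∣ n := by
      rw [← Int.natCast_dvd_natCast, hm]; exact Int.gcd_dvd_left _ _
    have hmd : (m : ℤ) ∣ d := by rw [hm]; exact Int.gcd_dvd_right _ _
    have hn' : 0 < n / m := Nat.div_pos (Nat.le_of_dvd hn hmn) (by omega)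
    refine ⟨fun i => linearCircleMap hn' (d / m) ((1 + i) / m),
      hf.values_eq_iUnion (by omega) hn' (Nat.mul_div_cancel' hmn) (Int.mul_ediv_cancel' hmd),
      fun i f' hf' => ?_⟩
    rw [hf'.eq_linearCircleMap hn']
    exact linearCircleMap_homotopic hn' _ _ _
end

section
/- Let X and Y be connected finite polyhedra and let f: X → D_n(Y) be an n-valued map. Then the first-coordinate projection q: Γ_f → X, q(x,y) = x, is a covering map all of whose fibers q^{-1}(x) = {x} × f(x) have exactly n points; in particular the pair (F, q), where F(x,y) = y, is a finite-valued map of cardinality at most n in the sense of Crabb. -/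
open Function Set

/-- The graph of an `n`-valued map, as a subspace of `X × Y`. -/
def NVGraph {X Y : Type*} [TopologicalSpace X] [TopologicalSpace Y] {n : ℕ}
    (f : NValuedMap X Y n) : Type _ :=
  {p : X × Y // p.2 ∈ UnordConf.values (f p.1)}

instance {X Y : Type*} [TopologicalSpace X] [TopologicalSpace Y] {n : ℕ}
    (f : NValuedMap X Y n) : TopologicalSpace (NVGraph f) :=
  instTopologicalSpaceSubtype

/-- First-coordinate projection of the graph. -/
def NVGraph.q {X Y : Type*} [TopologicalSpace X] [TopologicalSpace Y] {n : ℕ}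
    {f : NValuedMap X Y n} (z : NVGraph f) : X := z.1.1

/-- Second-coordinate projection of the graph. -/
def NVGraph.F {X Y : Type*} [TopologicalSpace X] [TopologicalSpace Y] {n : ℕ}
    {f : NValuedMap X Y n} (z : NVGraph f) : Y := z.1.2

/-!
Choose a representative `(y₁, …, yₙ)` of `f x₀` and pairwise disjoint open sets `Vᵢ ∋ yᵢ`
(`Y` is Hausdorff, being a polyhedron). The configurations having one point in each `Vᵢ` form
an open subset of `D_n(Y)`, so on an open neighbourhood `U` of `x₀` every `f x` has exactly one
point `sᵢ(x)` in each `Vᵢ`. Shrinking `Vᵢ` around `sᵢ(x)` shows that each `sᵢ` is continuous,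
and `(x, i) ↦ (x, sᵢ(x))` identifies `U × Fin n` with the part of the graph over `U`.
-/

open Topology

theorem IsFinitePolyhedron.t2Space {X : Type*} [TopologicalSpace X] (h : IsFinitePolyhedron X) :
    T2Space X := by
  obtain ⟨_, _, -, ⟨e⟩⟩ := h
  exact e.isEmbedding.t2Space

namespace UnordConf

variable {Y : Type*} [TopologicalSpace Y] {n : ℕ}

def meetsEach (V : Fin n → Set Y) : Set (UnordConf n Y) :=
  {c | ∃ a : OrdConf n Y, Quotient.mk _ a = c ∧ ∀ i, a.1 i ∈ V i}

theorem mk_mem_meetsEach_iff {V : Fin n → Set Y} {a : OrdConf n Y} :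
    Quotient.mk _ a ∈ meetsEach V ↔ ∃ σ : Equiv.Perm (Fin n), ∀ i, a.1 (σ i) ∈ V i := by
  constructor
  · rintro ⟨b, hb, hbV⟩
    obtain ⟨σ, hσ⟩ := Quotient.exact hb
    refine ⟨σ.symm, fun i => ?_⟩
    simpa [← hσ] using hbV i
  · rintro ⟨σ, hσ⟩
    exact ⟨⟨a.1 ∘ σ, a.2.comp σ.injective⟩, Quotient.sound ⟨σ.symm, by ext; simp⟩, hσ⟩

theorem isOpen_meetsEach {V : Fin n → Set Y} (hV : ∀ i, IsOpen (V i)) :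
    IsOpen (meetsEach V) := by
  have hq : IsQuotientMap (Quotient.mk (confSetoid n Y)) := isQuotientMap_quotient_mk'
  refine hq.isOpen_preimage.mp ?_
  have : Quotient.mk _ ⁻¹' meetsEach V =
      ⋃ σ : Equiv.Perm (Fin n), ⋂ i, (fun a : OrdConf n Y => a.1 (σ i)) ⁻¹' V i := by
    ext a
    simp only [mem_preimage, mem_iUnion, mem_iInter]
    exact mk_mem_meetsEach_iff
  rw [this]
  exact isOpen_iUnion fun σ => isOpen_iInter_of_finite fun i =>
    (hV i).preimage ((continuous_apply _).comp continuous_subtype_val)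

theorem exists_mem_meetsEach [T2Space Y] (c : UnordConf n Y) :
    ∃ V : Fin n → Set Y, (∀ i, IsOpen (V i)) ∧ Pairwise (Disjoint on V) ∧ c ∈ meetsEach V := by
  obtain ⟨a, rfl⟩ := Quotient.exists_rep c
  obtain ⟨U, hU, hUd⟩ := (finite_range a.1).t2_separation
  exact ⟨fun i => U (a.1 i), fun i => (hU _).2,
    fun i j hij => hUd ⟨i, rfl⟩ ⟨j, rfl⟩ (a.2.ne hij), a, rfl, fun i => (hU _).1⟩

section rep

variable {V : Fin n → Set Y} {c : UnordConf n Y} (hc : c ∈ meetsEach V)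

noncomputable def rep : OrdConf n Y := hc.choose

theorem mk_rep : Quotient.mk _ (rep hc) = c := hc.choose_spec.1

theorem rep_mem (i : Fin n) : (rep hc).1 i ∈ V i := hc.choose_spec.2 i

theorem values_eq_range_rep : c.values = range (rep hc).1 :=
  (congrArg values (mk_rep hc)).symm

noncomputable def index {y : Y} (hy : y ∈ c.values) : Fin n :=
  (show y ∈ range (rep hc).1 from values_eq_range_rep hc ▸ hy).choose

theorem rep_index {y : Y} (hy : y ∈ c.values) : (rep hc).1 (index hc hy) = y :=
  (show y ∈ range (rep hc).1 from values_eq_range_rep hc ▸ hy).choose_spec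

theorem index_eq_iff (hd : Pairwise (Disjoint on V)) {y : Y} (hy : y ∈ c.values) {i : Fin n} :
    index hc hy = i ↔ y ∈ V i := by
  have hyV' : y ∈ V (index hc hy) := by
    have := rep_mem hc (index hc hy)
    rwa [rep_index] at this
  refine ⟨fun h => h ▸ hyV', fun hyV => ?_⟩
  by_contra hne
  exact (hd hne).ne_of_mem hyV' hyV rfl

theorem rep_eq_of_mem (hd : Pairwise (Disjoint on V)) {y : Y} (hy : y ∈ c.values) {i : Fin n}
    (hyV : y ∈ V i) : (rep hc).1 i = y := by
  rw [← (index_eq_iff hc hd hy).mpr hyV, rep_index]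

theorem rep_mem_values (i : Fin n) : (rep hc).1 i ∈ c.values :=
  values_eq_range_rep hc ▸ mem_range_self i

end rep

theorem continuous_rep {V : Fin n → Set Y} (hV : ∀ i, IsOpen (V i))
    (hd : Pairwise (Disjoint on V)) (i : Fin n) :
    Continuous fun c : meetsEach V => (rep c.2).1 i := by
  refine continuous_iff_continuousAt.mpr fun c => ?_
  rw [ContinuousAt, (nhds_basis_opens _).tendsto_right_iff]
  rintro N ⟨hcN, hN⟩
  set W := update V i (V i ∩ N)
  have hW : ∀ j, IsOpen (W j) := (forall_update_iff V fun _ s => IsOpen s).mpr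
    ⟨(hV i).inter hN, fun j _ => hV j⟩
  have hcW : c.1 ∈ meetsEach W := ⟨rep c.2, mk_rep c.2,
    (forall_update_iff V fun j s => (rep c.2).1 j ∈ s).mpr
      ⟨⟨rep_mem c.2 i, hcN⟩, fun j _ => rep_mem c.2 j⟩⟩
  filter_upwards [((isOpen_meetsEach hW).preimage continuous_subtype_val).mem_nhds hcW]
    with c' hc'
  have hmem : (rep hc').1 i ∈ V i ∩ N := by simpa [W] using rep_mem hc' i
  exact rep_eq_of_mem c'.2 hd (rep_mem_values hc' i) hmem.1 ▸ hmem.2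

end UnordConf

namespace NVGraph

variable {X Y : Type*} [TopologicalSpace X] [TopologicalSpace Y] {n : ℕ}

theorem continuous_q (f : NValuedMap X Y n) : Continuous (q (f := f)) :=
  continuous_fst.comp continuous_subtype_val

theorem continuous_F (f : NValuedMap X Y n) : Continuous (F (f := f)) :=
  continuous_snd.comp continuous_subtype_val

open UnordConf in
noncomputable def preimageHomeomorph (f : NValuedMap X Y n) {V : Fin n → Set Y}
    (hV : ∀ i, IsOpen (V i)) (hd : Pairwise (Disjoint on V)) :
    q (f := f) ⁻¹' (f ⁻¹' meetsEach V) ≃ₜ (f ⁻¹' meetsEach V) × Fin n where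
  toFun z := (⟨q z.1, z.2⟩, index z.2 z.1.2)
  invFun p := ⟨⟨(p.1.1, (rep p.1.2).1 p.2), rep_mem_values p.1.2 p.2⟩, p.1.2⟩
  left_inv z := Subtype.ext <| Subtype.ext <| Prod.ext rfl (rep_index z.2 z.1.2)
  right_inv p := Prod.ext rfl
    ((index_eq_iff p.1.2 hd (rep_mem_values p.1.2 p.2)).mpr (rep_mem p.1.2 p.2))
  continuous_toFun := by
    refine ((continuous_q f).comp continuous_subtype_val).subtype_mk _ |>.prodMk ?_
    refine continuous_discrete_rng.mpr fun i => ?_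
    have : (fun z : q (f := f) ⁻¹' (f ⁻¹' meetsEach V) => index z.2 z.1.2) ⁻¹' {i} =
        (fun z => F z.1) ⁻¹' V i := by
      ext z
      exact index_eq_iff z.2 hd z.1.2
    rw [this]
    exact (hV i).preimage ((continuous_F f).comp continuous_subtype_val)
  continuous_invFun := by
    refine Continuous.subtype_mk (Continuous.subtype_mk ?_ _) _
    refine (continuous_subtype_val.comp continuous_fst).prodMk ?_
    refine continuous_prod_of_discrete_right.mpr fun i => ?_
    exact (continuous_rep hV hd i).comp
      ((f.continuous.comp continuous_subtype_val).subtype_mk fun x : f ⁻¹' meetsEach V => x.2)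

theorem isEvenlyCovered_q [T2Space Y] (f : NValuedMap X Y n) (x : X) :
    IsEvenlyCovered (q (f := f)) x (Fin n) := by
  obtain ⟨V, hV, hd, hx⟩ := UnordConf.exists_mem_meetsEach (f x)
  have hU : IsOpen (f ⁻¹' UnordConf.meetsEach V) :=
    (UnordConf.isOpen_meetsEach hV).preimage f.continuous
  exact ⟨inferInstance, f ⁻¹' UnordConf.meetsEach V, hx, hU, hU.preimage (continuous_q f),
    preimageHomeomorph f hV hd, fun _ => rfl⟩

end NVGraph

theorem statement_15_general {X Y : Type*} [TopologicalSpace X] [TopologicalSpace Y]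
    (hY : IsFinitePolyhedron Y)
    {n : ℕ} (f : NValuedMap X Y n) :
    IsCoveringMap (NVGraph.q (f := f)) ∧
    (∀ x : X, NVGraph.q (f := f) ⁻¹' {x} = {z : NVGraph f | z.1.1 = x ∧ z.1.2 ∈ UnordConf.values (f x)}) ∧
    (∀ x : X, Nat.card (NVGraph.q (f := f) ⁻¹' {x}) = n) ∧
    Continuous (NVGraph.F (f := f)) := by
  have := hY.t2Space
  have hcov := NVGraph.isEvenlyCovered_q f
  refine ⟨fun x => (hcov x).to_isEvenlyCovered_preimage, fun x => ?_, fun x => ?_,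
    NVGraph.continuous_F f⟩
  · ext z
    exact ⟨fun h => ⟨h, h ▸ z.2⟩, And.left⟩
  · rw [← Nat.card_congr (hcov x).fiberHomeomorph.toEquiv, Nat.card_fin]

theorem statement_15 {X Y : Type*} [TopologicalSpace X] [TopologicalSpace Y]
    [ConnectedSpace X] [ConnectedSpace Y]
    (hX : IsFinitePolyhedron X) (hY : IsFinitePolyhedron Y)
    {n : ℕ} (f : NValuedMap X Y n) :
    IsCoveringMap (NVGraph.q (f := f)) ∧
    (∀ x : X, NVGraph.q (f := f) ⁻¹' {x} = {z : NVGraph f | z.1.1 = x ∧ z.1.2 ∈ UnordConf.values (f x)}) ∧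
    (∀ x : X, Nat.card (NVGraph.q (f := f) ⁻¹' {x}) = n) ∧
    Continuous (NVGraph.F (f := f)) :=
  statement_15_general hY f
end
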